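/- arXiv:2103.09398 — 2 statements merged into one kernel-verified Lean document; each statement's English description precedes it below -/
import Mathlib

section
/- If there exists ν ∈ (0,1) such that ‖I - νA‖ < 1 - ν (operator 2-norm), then the map F(x) = x - ν(Ax - |x| - b) is a contraction on ℝ^n with Lipschitz constant ‖I - νA‖ + ν < 1. -/
open Matrix

/-- Componentwise absolute value of a vector. -/
def vecAbs {n : ℕ} (x : EuclideanSpace ℝ (Fin n)) : EuclideanSpace ℝ (Fin n) :=
  WithLp.toLp 2 (fun i => |x i|)

/-- The operator 2-norm of a matrix. -/
noncomputable def opNorm {n : ℕ} (A : Matrix (Fin n) (Fin n) ℝ) : ℝ :=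
  ‖LinearMap.toContinuousLinearMap (Matrix.toEuclideanLin A)‖

lemma norm_vecAbs_sub_vecAbs_le {n : ℕ} (x y : EuclideanSpace ℝ (Fin n)) :
    ‖vecAbs x - vecAbs y‖ ≤ ‖x - y‖ := by
  rw [EuclideanSpace.norm_eq, EuclideanSpace.norm_eq]
  gcongr with i
  exact abs_abs_sub_abs_le_abs_sub (x i) (y i)

lemma norm_toEuclideanLin_le_opNorm {n : ℕ} (A : Matrix (Fin n) (Fin n) ℝ)
    (x : EuclideanSpace ℝ (Fin n)) : ‖Matrix.toEuclideanLin A x‖ ≤ opNorm A * ‖x‖ :=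
  (LinearMap.toContinuousLinearMap (Matrix.toEuclideanLin A)).le_opNorm x

lemma toEuclideanLin_one_sub_smul {n : ℕ} (A : Matrix (Fin n) (Fin n) ℝ) (ν : ℝ)
    (x : EuclideanSpace ℝ (Fin n)) :
    Matrix.toEuclideanLin (1 - ν • A) x = x - ν • Matrix.toEuclideanLin A x := by
  simp only [map_sub, map_smul, LinearMap.sub_apply, LinearMap.smul_apply, toLpLin_one,
    LinearMap.id_apply]

lemma norm_map_add_smul_sub_le {E : Type*} [SeminormedAddCommGroup E] [NormedSpace ℝ E]
    (T : E →ₗ[ℝ] E) (g : E → E) {c ν : ℝ} (hT : ∀ z, ‖T z‖ ≤ c * ‖z‖)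
    (hg : ∀ x y, ‖g x - g y‖ ≤ ‖x - y‖) (hν : 0 ≤ ν) (x y : E) :
    ‖(T x + ν • g x) - (T y + ν • g y)‖ ≤ (c + ν) * ‖x - y‖ := by
  have hsplit : (T x + ν • g x) - (T y + ν • g y) = T (x - y) + ν • (g x - g y) := by
    rw [map_sub, smul_sub]; abel
  calc ‖(T x + ν • g x) - (T y + ν • g y)‖
      ≤ ‖T (x - y)‖ + ‖ν • (g x - g y)‖ := hsplit ▸ norm_add_le _ _
    _ ≤ c * ‖x - y‖ + ν * ‖x - y‖ := by
        rw [norm_smul, Real.norm_of_nonneg hν]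
        gcongr
        exacts [hT _, hg x y]
    _ = (c + ν) * ‖x - y‖ := by ring

/-- If `ν ∈ (0,1)` satisfies `‖I - νA‖ < 1 - ν`, then `F(x) = x - ν(Ax - |x| - b)` is a
contraction with Lipschitz constant `‖I - νA‖ + ν < 1`. -/
theorem fixed_point_contraction (n : ℕ) (A : Matrix (Fin n) (Fin n) ℝ)
    (b : EuclideanSpace ℝ (Fin n)) (ν : ℝ) (hν : ν ∈ Set.Ioo (0 : ℝ) 1)
    (hA : opNorm (1 - ν • A) < 1 - ν) :
    let F : EuclideanSpace ℝ (Fin n) → EuclideanSpace ℝ (Fin n) :=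
      fun x => x - ν • (Matrix.toEuclideanLin A x - vecAbs x - b)
    opNorm (1 - ν • A) + ν < 1 ∧
      ∀ x y : EuclideanSpace ℝ (Fin n),
        ‖F x - F y‖ ≤ (opNorm (1 - ν • A) + ν) * ‖x - y‖ := by
  intro F
  refine ⟨by linarith, fun x y => ?_⟩
  have hF : ∀ z, F z = (Matrix.toEuclideanLin (1 - ν • A) z + ν • vecAbs z) + ν • b := by
    intro z
    rw [toEuclideanLin_one_sub_smul]
    simp only [F, smul_sub]
    abel
  rw [hF, hF, add_sub_add_right_eq_sub]
  exact norm_map_add_smul_sub_le _ _ (norm_toEuclideanLin_le_opNorm _)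
    norm_vecAbs_sub_vecAbs_le hν.1.le x y
end

section
/- If A is invertible with ‖A⁻¹‖ < 1 (operator 2-norm) and ν ∈ (0,1), then the map G(x) = x - νA⁻¹(Ax - |x| - b) is a contraction with Lipschitz constant 1 - ν + ν‖A⁻¹‖ < 1; consequently Ax - |x| = b has a unique solution for every b ∈ ℝ^n. -/
/-!
Since `A⁻¹ A = 1`, the difference `G x - G y` equals `(1 - ν) (x - y) + ν A⁻¹ (|x| - |y|)`, and `|·|`
is 1-Lipschitz, which gives the Lipschitz constant `1 - ν + ν ‖A⁻¹‖`. For `ν = 1` the map is a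
contraction whose fixed points are exactly the solutions of `A x - |x| = c`, so Banach's fixed point
theorem gives existence and uniqueness.
-/

open Matrix

theorem lipschitzWith_vecAbs (n : ℕ) : LipschitzWith 1 (vecAbs (n := n)) := by
  refine LipschitzWith.of_dist_le_mul fun x y => ?_
  rw [NNReal.coe_one, one_mul, EuclideanSpace.dist_eq, EuclideanSpace.dist_eq]
  gcongr with i
  exact abs_abs_sub_abs_le_abs_sub (x i) (y i)

section toLpLin

variable {n R : Type*} [Fintype n] [DecidableEq n] [CommRing R] (p : ENNReal) {A : Matrix n n R}

theorem Matrix.leftInverse_toLpLin_inv (hA : IsUnit A) :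
    Function.LeftInverse (toLpLin p p A⁻¹) (toLpLin p p A) := fun x => by
  rw [← LinearMap.comp_apply, ← toLpLin_mul_same,
    nonsing_inv_mul _ ((isUnit_iff_isUnit_det A).mp hA), toLpLin_one, LinearMap.id_apply]

theorem Matrix.rightInverse_toLpLin_inv (hA : IsUnit A) :
    Function.RightInverse (toLpLin p p A⁻¹) (toLpLin p p A) := fun x => by
  rw [← LinearMap.comp_apply, ← toLpLin_mul_same,
    mul_nonsing_inv _ ((isUnit_iff_isUnit_det A).mp hA), toLpLin_one, LinearMap.id_apply]

end toLpLin

section relaxedMap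

variable {E : Type*} [NormedAddCommGroup E] [NormedSpace ℝ E]

/-- The paper's `G`, with `L = A`, `M = A⁻¹` and `φ = |·|`. -/
def relaxedMap (L M φ : E → E) (ν : ℝ) (c x : E) : E :=
  x - ν • M (L x - φ x - c)

variable {L : E →ₗ[ℝ] E} {M : E →L[ℝ] E} {φ : E → E} {ν : ℝ}

theorem relaxedMap_sub_relaxedMap (hML : Function.LeftInverse M L) (c x y : E) :
    relaxedMap L M φ ν c x - relaxedMap L M φ ν c y = (1 - ν) • (x - y) + ν • M (φ x - φ y) := by
  have hM : M (L x - φ x - c) - M (L y - φ y - c) = (x - y) - M (φ x - φ y) := by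
    simp only [map_sub, hML x, hML y]
    abel
  rw [relaxedMap, relaxedMap, sub_sub_sub_comm, ← smul_sub, hM]
  module

theorem norm_relaxedMap_sub_le {K : NNReal} (hML : Function.LeftInverse M L)
    (hφ : LipschitzWith K φ) (hν₀ : 0 ≤ ν) (hν₁ : ν ≤ 1) (c x y : E) :
    ‖relaxedMap L M φ ν c x - relaxedMap L M φ ν c y‖ ≤ (1 - ν + ν * (‖M‖ * K)) * ‖x - y‖ := by
  rw [relaxedMap_sub_relaxedMap hML]
  calc ‖(1 - ν) • (x - y) + ν • M (φ x - φ y)‖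
      ≤ (1 - ν) * ‖x - y‖ + ν * ‖M (φ x - φ y)‖ := by
        refine (norm_add_le _ _).trans_eq ?_
        rw [norm_smul_of_nonneg (sub_nonneg.mpr hν₁), norm_smul_of_nonneg hν₀]
    _ ≤ (1 - ν) * ‖x - y‖ + ν * (‖M‖ * (K * ‖x - y‖)) := by
        gcongr
        exact M.le_opNorm_of_le (hφ.norm_sub_le x y)
    _ = (1 - ν + ν * (‖M‖ * K)) * ‖x - y‖ := by ring

theorem relaxedMap_eq_self_iff (hLM : Function.RightInverse M L) (hν : ν ≠ 0) (c x : E) :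
    relaxedMap L M φ ν c x = x ↔ L x - φ x = c := by
  rw [relaxedMap, sub_eq_self, smul_eq_zero, or_iff_right hν,
    map_eq_zero_iff M hLM.injective, sub_eq_zero]

theorem existsUnique_sub_eq_of_opNorm_mul_lt_one [CompleteSpace E] {K : NNReal}
    (hML : Function.LeftInverse M L) (hLM : Function.RightInverse M L) (hφ : LipschitzWith K φ) (hMK : ‖M‖ * K < 1) (c : E) :
    ∃! x, L x - φ x = c := by
  have hG : ContractingWith (‖M‖₊ * K) (relaxedMap L M φ 1 c) := by
    refine ⟨by exact_mod_cast hMK, LipschitzWith.of_dist_le_mul fun x y => ?_⟩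
    simpa [dist_eq_norm] using norm_relaxedMap_sub_le hML hφ zero_le_one le_rfl c x y
  have hfix := relaxedMap_eq_self_iff (φ := φ) hLM one_ne_zero c
  exact ⟨_, (hfix _).mp hG.fixedPoint_isFixedPt,
    fun y hy => hG.fixedPoint_unique ((hfix y).mpr hy)⟩

end relaxedMap

/-- If `A` is invertible with `‖A⁻¹‖ < 1` and `ν ∈ (0,1)`, then
`G(x) = x - νA⁻¹(Ax - |x| - b)` is a contraction with Lipschitz constant
`1 - ν + ν‖A⁻¹‖ < 1`; consequently `Ax - |x| = b` has a unique solution for every `b`. -/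
theorem inverse_fixed_point_contraction (n : ℕ) (A : Matrix (Fin n) (Fin n) ℝ)
    (hA : IsUnit A) (hinv : opNorm A⁻¹ < 1) (ν : ℝ) (hν : ν ∈ Set.Ioo (0 : ℝ) 1)
    (b : EuclideanSpace ℝ (Fin n)) :
    let G : EuclideanSpace ℝ (Fin n) → EuclideanSpace ℝ (Fin n) :=
      fun x => x - ν • Matrix.toEuclideanLin A⁻¹ (Matrix.toEuclideanLin A x - vecAbs x - b)
    (1 - ν + ν * opNorm A⁻¹ < 1 ∧
      ∀ x y : EuclideanSpace ℝ (Fin n),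
        ‖G x - G y‖ ≤ (1 - ν + ν * opNorm A⁻¹) * ‖x - y‖) ∧
      ∀ c : EuclideanSpace ℝ (Fin n),
        ∃! x : EuclideanSpace ℝ (Fin n), Matrix.toEuclideanLin A x - vecAbs x = c := by
  intro G
  obtain ⟨hν₀, hν₁⟩ := hν
  let M := LinearMap.toContinuousLinearMap (toEuclideanLin A⁻¹)
  have hML : Function.LeftInverse M (toEuclideanLin A) := leftInverse_toLpLin_inv 2 hA
  have hLM : Function.RightInverse M (toEuclideanLin A) := rightInverse_toLpLin_inv 2 hA
  have hM : ‖M‖ * (1 : NNReal) = opNorm A⁻¹ := mul_one _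
  refine ⟨⟨by linarith [mul_lt_mul_of_pos_left hinv hν₀], fun x y => ?_⟩,
    existsUnique_sub_eq_of_opNorm_mul_lt_one hML hLM (lipschitzWith_vecAbs n) (hM ▸ hinv)⟩
  exact hM ▸ norm_relaxedMap_sub_le hML (lipschitzWith_vecAbs n) hν₀.le hν₁.le b x y
end
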